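/- arXiv:1811.07642 — 6 statements merged into one kernel-verified Lean document; each statement's English description precedes it below -/
import Mathlib

section
/- Let G1, G2, GT be groups of prime order p with bilinear map e. Let g̃ ∈ G1, ϑ ∈ G2, Ψ, Ψ' ∈ G2 (the hashes H2(ID_V), H2(ID_{V'})), and β, β_v, t_v ∈ ZMod p. Define SK_V = Ψ^β, SK_{V'} = Ψ'^β, RK1 = g̃^β_v, RK2 = ϑ^β_v * SK_V * SK_{V'}⁻¹, E¹_V = e(g̃^β, Ψ)^t_v, E²_V = g̃^t_v, and E³_V = ϑ^t_v. Then, setting Θ1 = RK2 * SK_{V'} and Θ2 = e(E²_V, Θ1) / e(RK1, E³_V), one has Θ2 = E¹_V. -/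
/-- Abstract exponentiation of a commutative group of prime order `p`
by scalars in `ZMod p`. -/
structure PPow (p : ℕ) (G : Type*) [CommGroup G] where
  pow : G → ZMod p → G
  pow_add : ∀ g a b, pow g (a + b) = pow g a * pow g b
  mul_pow : ∀ g h a, pow (g * h) a = pow g a * pow h a
  pow_pow : ∀ g a b, pow (pow g a) b = pow g (a * b)
  pow_one' : ∀ g, pow g 1 = g

/-- An abstract bilinear (pairing) map `e : G1 × G2 → GT` compatible with the
`ZMod p`-exponentiations on the three groups. -/
structure Bilin (p : ℕ) (G1 G2 GT : Type*) [CommGroup G1] [CommGroup G2] [CommGroup GT]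
    (P1 : PPow p G1) (P2 : PPow p G2) (PT : PPow p GT) where
  e : G1 → G2 → GT
  bilin : ∀ g h x y, e (P1.pow g x) (P2.pow h y) = PT.pow (e g h) (x * y)
  left_mul : ∀ a b c, e (a * b) c = e a c * e b c
  right_mul : ∀ a b c, e a (b * c) = e a b * e a c

theorem stmt7 {p : ℕ} [Fact p.Prime] {G1 G2 GT : Type*}
    [CommGroup G1] [CommGroup G2] [CommGroup GT]
    (P1 : PPow p G1) (P2 : PPow p G2) (PT : PPow p GT)
    (B : Bilin p G1 G2 GT P1 P2 PT)
    (gt : G1) (ϑ Ψ Ψ' : G2) (β β_v t_v : ZMod p)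
    (SK_V : G2) (hSKV : SK_V = P2.pow Ψ β)
    (SK_V' : G2) (hSKV' : SK_V' = P2.pow Ψ' β)
    (RK1 : G1) (hRK1 : RK1 = P1.pow gt β_v)
    (RK2 : G2) (hRK2 : RK2 = P2.pow ϑ β_v * SK_V * SK_V'⁻¹)
    (E1_V : GT) (hE1 : E1_V = PT.pow (B.e (P1.pow gt β) Ψ) t_v)
    (E2_V : G1) (hE2 : E2_V = P1.pow gt t_v)
    (E3_V : G2) (hE3 : E3_V = P2.pow ϑ t_v)
    (Θ1 : G2) (hΘ1 : Θ1 = RK2 * SK_V')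
    (Θ2 : GT) (hΘ2 : Θ2 = B.e E2_V Θ1 / B.e RK1 E3_V) :
    Θ2 = E1_V := by
  subst hΘ2 hΘ1 hRK2 hRK1 hE1 hE2 hE3 hSKV hSKV'
  have h1 : P2.pow ϑ β_v * P2.pow Ψ β * (P2.pow Ψ' β)⁻¹ * P2.pow Ψ' β
      = P2.pow ϑ β_v * P2.pow Ψ β := by group
  rw [h1, B.right_mul]
  have hb : ∀ (g : G1) (h : G2) (x y : ZMod p),
      B.e (P1.pow g x) (P2.pow h y) = PT.pow (B.e g h) (x*y) := B.bilin
  have hΨ : Ψ = P2.pow Ψ 1 := (P2.pow_one' Ψ).symm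
  rw [hb gt ϑ t_v β_v, hb gt Ψ t_v β, hb gt ϑ β_v t_v]
  conv_rhs => rw [hΨ]
  rw [hb gt Ψ β 1, PT.pow_pow]
  rw [mul_comm t_v β_v, mul_div_assoc, show t_v * β = β * 1 * t_v by ring]
  simp
end

section
/- Let G1 be a cyclic group of prime order p. Let ḡ ∈ G1 and scalars x, π, k, a, γ1, γ2 ∈ ZMod p with a ≠ 0. Define g1 = ḡ^γ1, g2 = ḡ^(((x+π)*k − 1) * a⁻¹), and g3 = g2^γ2. Let s_cv ∈ ZMod p, set w_cv = a*γ1 − s_cv*γ2, and Z_CV = ḡ^(γ1*k). If x + π ≠ 0, then Z_CV = (g1 * g2^w_cv * g3^s_cv)^((x+π)⁻¹). -/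
theorem stmt8 {p : ℕ} [Fact p.Prime] {G1 : Type*} [CommGroup G1]
    (P : PPow p G1) (gbar : G1) (x π k a γ1 γ2 s_cv : ZMod p)
    (ha : a ≠ 0)
    (g1 : G1) (hg1 : g1 = P.pow gbar γ1)
    (g2 : G1) (hg2 : g2 = P.pow gbar (((x + π) * k - 1) * a⁻¹))
    (g3 : G1) (hg3 : g3 = P.pow g2 γ2)
    (w_cv : ZMod p) (hw : w_cv = a * γ1 - s_cv * γ2)
    (Z_CV : G1) (hZ : Z_CV = P.pow gbar (γ1 * k))
    (hxπ : x + π ≠ 0) :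
    Z_CV = P.pow (g1 * P.pow g2 w_cv * P.pow g3 s_cv) (x + π)⁻¹ := by
  subst hg1 hg2 hg3 hw hZ
  rw [P.pow_pow, P.pow_pow, P.pow_pow, ← P.pow_add, ← P.pow_add, P.pow_pow]
  congr 1
  field_simp
  ring
end

section
/- Let G1 be a cyclic group of prime order p and g2, g3 ∈ G1 with g2 a generator. Suppose there exist z, w*, s*, w_v, s_v ∈ ZMod p and Z ∈ G1 with x + z ≠ 0 such that Z = (g1 * g2^w* * g3^s*)^((x+z)⁻¹) and Z = (g1 * g2^w_v * g3^s_v)^((x+z)⁻¹) for some fixed g1 ∈ G1 and x ∈ ZMod p, with s* ≠ s_v. Then g3 = g2^((w* − w_v) * (s_v − s*)⁻¹). -/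
theorem stmt9 {p : ℕ} [Fact p.Prime] {G1 : Type*} [CommGroup G1]
    (P : PPow p G1)
    (hinj : ∀ a : ZMod p, a ≠ 0 → Function.Injective (fun g : G1 => P.pow g a))
    (g1 g2 g3 Z : G1)
    (hg2inj : Function.Injective (P.pow g2))
    (hg2surj : Function.Surjective (P.pow g2))
    (x z wstar sstar w_v s_v : ZMod p)
    (hxz : x + z ≠ 0) (hs : sstar ≠ s_v)
    (hZ1 : Z = P.pow (g1 * P.pow g2 wstar * P.pow g3 sstar) (x + z)⁻¹)
    (hZ2 : Z = P.pow (g1 * P.pow g2 w_v * P.pow g3 s_v) (x + z)⁻¹) :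
    g3 = P.pow g2 ((wstar - w_v) * (s_v - sstar)⁻¹) := by
  have hinv : (x + z)⁻¹ ≠ 0 := inv_ne_zero hxz
  have heq : g1 * P.pow g2 wstar * P.pow g3 sstar
      = g1 * P.pow g2 w_v * P.pow g3 s_v :=
    hinj _ hinv (hZ1.symm.trans hZ2)
  obtain ⟨t, ht⟩ := hg2surj g3
  rw [← ht, P.pow_pow, P.pow_pow, mul_assoc, mul_assoc, ← P.pow_add, ← P.pow_add] at heq
  have h2 : wstar + t * sstar = w_v + t * s_v :=
    hg2inj (mul_left_cancel heq)
  have hsv : s_v - sstar ≠ 0 := sub_ne_zero.mpr (Ne.symm hs)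
  have ht2 : t = (wstar - w_v) * (s_v - sstar)⁻¹ := by
    rw [eq_mul_inv_iff_mul_eq₀ hsv]
    linear_combination -h2
  rw [← ht, ht2]
end

section
/- Let G1 be a cyclic group of prime order p, g ∈ G1, x ∈ ZMod p, and let f be a polynomial over ZMod p that factors as f(T) = (T + z)*d(T) + ρ0 with ρ0 ≠ 0, where z ∈ ZMod p and x + z ≠ 0. If Ψ = (g^(f(x)))^((x+z)⁻¹), then g^((x+z)⁻¹) = (Ψ * g^(−d(x)))^(ρ0⁻¹). -/
open Polynomial in
theorem Polynomial.eval_mul_inv_sub_eval_of_eq_mul_add_C {K : Type*} [Field K]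
    {f d : K[X]} {z r x : K} (hf : f = (X + C z) * d + C r) (hxz : x + z ≠ 0) :
    f.eval x * (x + z)⁻¹ - d.eval x = r * (x + z)⁻¹ := by
  subst hf
  simp only [eval_add, eval_mul, eval_X, eval_C]
  field_simp
  ring

open Polynomial in
theorem stmt10 {p : ℕ} [Fact p.Prime] {G1 : Type*} [CommGroup G1]
    (P : PPow p G1) (g : G1) (x z ρ0 : ZMod p)
    (f d : Polynomial (ZMod p))
    (hf : f = (X + C z) * d + C ρ0)
    (hρ : ρ0 ≠ 0) (hxz : x + z ≠ 0)
    (Ψ : G1) (hΨ : Ψ = P.pow (P.pow g (f.eval x)) (x + z)⁻¹) :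
    P.pow g (x + z)⁻¹ = P.pow (Ψ * P.pow g (-(d.eval x))) ρ0⁻¹ := by
  have hexp : (f.eval x * (x + z)⁻¹ + -d.eval x) * ρ0⁻¹ = (x + z)⁻¹ := by
    rw [← sub_eq_add_neg, eval_mul_inv_sub_eval_of_eq_mul_add_C hf hxz, mul_right_comm,
      mul_inv_cancel₀ hρ, one_mul]
  rw [hΨ, P.pow_pow, ← P.pow_add, P.pow_pow, hexp]
end

section
/- Let G1 be a cyclic group of prime order p, g ∈ G1, x, π_v ∈ ZMod p with x + π_v ≠ 0, and f a polynomial over ZMod p divisible by (T + π_v), with quotient f_v(T) = f(T)/(T+π_v). Let ḡ = g^(f(x)) and let γ1, γ2, π, k, a, w_v, s_v ∈ ZMod p with a ≠ 0. Define g1 = ḡ^γ1, g2 = ḡ^(((x+π)*k − 1)*a⁻¹), g3 = g2^γ2. Then (g^(f_v(x)))^(γ1 + (π*k − 1)*(w_v + γ2*s_v)*a⁻¹) * (g^(x*f_v(x)))^(k*(w_v + γ2*s_v)*a⁻¹) = (g1 * g2^w_v * g3^s_v)^((x+π_v)⁻¹). -/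
lemma PPow.pow_mul_pow {p : ℕ} {G : Type*} [CommGroup G] (P : PPow p G)
    (g : G) (a b : ZMod p) : P.pow g a * P.pow g b = P.pow g (a + b) :=
  (P.pow_add g a b).symm

open Polynomial in
theorem stmt11 {p : ℕ} [Fact p.Prime] {G1 : Type*} [CommGroup G1]
    (P : PPow p G1) (g : G1) (x π_v : ZMod p) (hxπ : x + π_v ≠ 0)
    (f f_v : Polynomial (ZMod p)) (hdvd : f = f_v * (X + C π_v))
    (gbar : G1) (hgbar : gbar = P.pow g (f.eval x))
    (γ1 γ2 π k a w_v s_v : ZMod p) (ha : a ≠ 0)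
    (g1 : G1) (hg1 : g1 = P.pow gbar γ1)
    (g2 : G1) (hg2 : g2 = P.pow gbar (((x + π) * k - 1) * a⁻¹))
    (g3 : G1) (hg3 : g3 = P.pow g2 γ2) :
    P.pow (P.pow g (f_v.eval x)) (γ1 + (π * k - 1) * (w_v + γ2 * s_v) * a⁻¹) *
      P.pow (P.pow g (x * f_v.eval x)) (k * (w_v + γ2 * s_v) * a⁻¹) =
    P.pow (g1 * P.pow g2 w_v * P.pow g3 s_v) (x + π_v)⁻¹ := by
  have hf : f.eval x = f_v.eval x * (x + π_v) := by
    simp [hdvd]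
  subst hg3 hg2 hg1 hgbar
  simp only [P.pow_pow, P.mul_pow, P.pow_mul_pow]
  congr 1
  rw [hf]
  field_simp
  ring
end

section
/- Let G1 be a cyclic group of prime order p with elements g̃, Y_CV ∈ G1, g̃ a generator, and fixed (P_V, Q_V) ∈ G1 × G1. Suppose two accepting transcripts (P'_V, Q'_V, c, x̂, k̂) and (P'_V, Q'_V, c', x̂', k̂') with c ≠ c' satisfy P'_V = g̃^x̂ * Y_CV^k̂ * P_V^c, Q'_V = g̃^k̂ * Q_V^c, P'_V = g̃^x̂' * Y_CV^k̂' * P_V^c', Q'_V = g̃^k̂' * Q_V^c'. Then, setting k_v = (k̂' − k̂)*(c − c')⁻¹ and x_u = (x̂' − x̂)*(c − c')⁻¹, one has Q_V = g̃^k_v and P_V = g̃^x_u * Y_CV^k_v. -/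
lemma PPow.pow_sub {p : ℕ} {G : Type*} [CommGroup G] (P : PPow p G)
    (g : G) (a b : ZMod p) : P.pow g (a - b) = P.pow g a * (P.pow g b)⁻¹ := by
  have h := P.pow_add g (a - b) b
  rw [sub_add_cancel] at h
  rw [eq_mul_inv_iff_mul_eq, ← h]

theorem stmt13 {p : ℕ} [Fact p.Prime] {G1 : Type*} [CommGroup G1]
    (P : PPow p G1) (gt Y_CV P_V Q_V P'_V Q'_V : G1)
    (c c' xh kh xh' kh' : ZMod p) (hc : c ≠ c')
    (h1 : P'_V = P.pow gt xh * P.pow Y_CV kh * P.pow P_V c)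
    (h2 : Q'_V = P.pow gt kh * P.pow Q_V c)
    (h3 : P'_V = P.pow gt xh' * P.pow Y_CV kh' * P.pow P_V c')
    (h4 : Q'_V = P.pow gt kh' * P.pow Q_V c')
    (k_v : ZMod p) (hk : k_v = (kh' - kh) * (c - c')⁻¹)
    (x_u : ZMod p) (hx : x_u = (xh' - xh) * (c - c')⁻¹) :
    Q_V = P.pow gt k_v ∧ P_V = P.pow gt x_u * P.pow Y_CV k_v := by
  have hd : c - c' ≠ 0 := sub_ne_zero.mpr hc
  have hdd : (c - c') * (c - c')⁻¹ = 1 := mul_inv_cancel₀ hd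
  have key1 := h2.symm.trans h4
  have key2 := h1.symm.trans h3
  have hQ : P.pow Q_V (c - c') = P.pow gt (kh' - kh) := by
    rw [P.pow_sub, P.pow_sub, ← div_eq_mul_inv, ← div_eq_mul_inv,
      div_eq_div_iff_mul_eq_mul, mul_comm]
    exact key1
  have hQ2 : Q_V = P.pow gt k_v := by
    have := congrArg (fun z => P.pow z (c - c')⁻¹) hQ
    simpa [P.pow_pow, hdd, P.pow_one', hk] using this
  refine ⟨hQ2, ?_⟩
  have hP : P.pow P_V (c - c') = P.pow gt (xh' - xh) * P.pow Y_CV (kh' - kh) := by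
    rw [P.pow_sub, P.pow_sub, P.pow_sub, mul_mul_mul_comm, ← mul_inv,
      ← div_eq_mul_inv, ← div_eq_mul_inv, div_eq_div_iff_mul_eq_mul, mul_comm]
    exact key2
  have := congrArg (fun z => P.pow z (c - c')⁻¹) hP
  simpa [P.pow_pow, P.mul_pow, hdd, P.pow_one', hk, hx] using this
end
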